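/- Under the stated assumptions, the set 𝔪 := {Γ̂(x) : x ∈ W} is a linear subspace of L; the subspace [𝔪,𝔪] := span{[P,Q] : P, Q ∈ 𝔪} is contained in {0} × 𝔥 and satisfies [[𝔪,𝔪],𝔪] ⊆ 𝔪; consequently 𝔤 := [𝔪,𝔪] + 𝔪 is a Lie subalgebra of L, the sum is direct (i.e. [𝔪,𝔪] ∩ 𝔪 = {0}), and [𝔪,𝔪] = 𝔤 ∩ ({0} × 𝔥). -/
import Mathlib


open scoped RealInnerProductSpace

/-- The span of all brackets of elements of a submodule `m` with respect to a bilinear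
bracket `br`. -/
def bracketSpan {L : Type*} [AddCommGroup L] [Module ℝ L]
    (br : L →ₗ[ℝ] L →ₗ[ℝ] L) (m : Submodule ℝ L) : Submodule ℝ L :=
  Submodule.span ℝ {p : L | ∃ q ∈ m, ∃ r ∈ m, br q r = p}

set_option maxHeartbeats 1000000 in
/-- Lemma 8(a) of the paper; extrinsic analogue of the Nomizu
construction.  In the setting of the construction (same context as Lemma 7):
the set `𝔪 = {Γ̂(x) : x ∈ W}`, where `Γ̂(x) = (x, β(x))`, is a linear subspace of
`L = V × H`; the span `[𝔪,𝔪]` of all brackets of elements of `𝔪` is contained in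
`{0} × H` and satisfies `[[𝔪,𝔪],𝔪] ⊆ 𝔪`; consequently `𝔤 := [𝔪,𝔪] + 𝔪` is a Lie
subalgebra of `L`, the sum is direct, and `[𝔪,𝔪] = 𝔤 ∩ ({0} × H)`. -/
theorem stmt_15
    (V : Type*) [NormedAddCommGroup V] [InnerProductSpace ℝ V] [FiniteDimensional ℝ V]
    (H : Submodule ℝ (V →ₗ[ℝ] V))
    (hHskew : ∀ A ∈ H, ∀ u v : V, ⟪A u, v⟫ = -⟪u, A v⟫)
    (hHlie : ∀ A ∈ H, ∀ B ∈ H, A ∘ₗ B - B ∘ₗ A ∈ H)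
    -- the Lie algebra structure on `L = V × H`
    (br : (V × H) →ₗ[ℝ] (V × H) →ₗ[ℝ] (V × H))
    (hbr_alt : ∀ p : V × H, br p p = 0)
    (hbr_jacobi : ∀ p q r : V × H,
      br p (br q r) + br q (br r p) + br r (br p q) = 0)
    (hbr_hh : ∀ A B : H, br (0, A) (0, B) =
      (0, ⟨(A : V →ₗ[ℝ] V) ∘ₗ (B : V →ₗ[ℝ] V) - (B : V →ₗ[ℝ] V) ∘ₗ (A : V →ₗ[ℝ] V),
           hHlie A A.2 B B.2⟩))
    (hbr_hv : ∀ (A : H) (v : V), br (0, A) (v, 0) = ((A : V →ₗ[ℝ] V) v, 0))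
    (hbr_vv : ∀ v w : V, (br (v, 0) (w, 0)).1 = 0)
    (R : V → V → (V →ₗ[ℝ] V))
    (hR : ∀ v w : V, ((br (v, 0) (w, 0)).2 : V →ₗ[ℝ] V) = -R v w)
    -- the 2-jet data
    (W : Submodule ℝ V)
    (b : V →ₗ[ℝ] V →ₗ[ℝ] V)
    (hb_symm : ∀ x ∈ W, ∀ y ∈ W, b x y = b y x)
    (hb_perp : ∀ x ∈ W, ∀ y ∈ W, ∀ w ∈ W, ⟪b x y, w⟫ = 0)
    (N O : Submodule ℝ V)
    (hN : N = Submodule.span ℝ {u : V | ∃ x ∈ W, ∃ y ∈ W, b x y = u})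
    (hO : O = W ⊔ N)
    -- the associated skew-adjoint maps `𝐛(x)`
    (bb : V → (V →ₗ[ℝ] V))
    (hbb_skew : ∀ x ∈ W, ∀ u v : V, ⟪bb x u, v⟫ = -⟪u, bb x v⟫)
    (hbb_W : ∀ x ∈ W, ∀ y ∈ W, bb x y = b x y)
    (hbb_N : ∀ x ∈ W, ∀ ξ ∈ N, bb x ξ ∈ W)
    (hbb_perp : ∀ x ∈ W, ∀ v ∈ Oᗮ, bb x v = 0)
    -- assumption (i): `W` is curvature invariant
    (hcurvW : ∀ x ∈ W, ∀ y ∈ W, ∀ z ∈ W, R x y z ∈ W)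
    -- assumption (ii): `O` is curvature invariant
    (hcurvO : ∀ x ∈ W, ∀ y ∈ W, ∀ v ∈ O, R x y v ∈ O)
    -- assumption (iii): semiparallelity
    (hsemi : ∀ x ∈ W, ∀ y ∈ W, ∀ z ∈ W, ∀ v ∈ O,
      bb (R x y z - (bb x (bb y z) - bb y (bb x z))) v =
        (R x y - (bb x ∘ₗ bb y - bb y ∘ₗ bb x)) (bb z v) -
          bb z ((R x y - (bb x ∘ₗ bb y - bb y ∘ₗ bb x)) v))
    -- assumption (iv): the lift `β`
    (β : V → H)
    (hβO : ∀ x ∈ W, ∀ v ∈ O, (β x : V →ₗ[ℝ] V) v ∈ O)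
    (hβ : ∀ x ∈ W, ∀ v ∈ O, (β x : V →ₗ[ℝ] V) v = bb x v)
    -- assumption (v): uniqueness
    (huniq : ∀ A ∈ H, (∀ v ∈ O, A v = 0) → A = 0) :
    ∃ 𝔪 : Submodule ℝ (V × H),
      -- `𝔪` is exactly the set `{Γ̂(x) : x ∈ W}`, which is hence a linear subspace
      (𝔪 : Set (V × H)) = {p : V × H | ∃ x ∈ W, p = (x, β x)} ∧
      -- `[𝔪,𝔪] ⊆ {0} × H`
      bracketSpan br 𝔪 ≤ (⊥ : Submodule ℝ V).prod (⊤ : Submodule ℝ H) ∧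
      -- `[[𝔪,𝔪],𝔪] ⊆ 𝔪`
      (∀ p ∈ bracketSpan br 𝔪, ∀ q ∈ 𝔪, br p q ∈ 𝔪) ∧
      -- `𝔤 := [𝔪,𝔪] + 𝔪` is a Lie subalgebra of `L`
      (∀ p ∈ bracketSpan br 𝔪 ⊔ 𝔪, ∀ q ∈ bracketSpan br 𝔪 ⊔ 𝔪,
        br p q ∈ bracketSpan br 𝔪 ⊔ 𝔪) ∧
      -- the sum `𝔤 = [𝔪,𝔪] ⊕ 𝔪` is direct
      bracketSpan br 𝔪 ⊓ 𝔪 = ⊥ ∧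
      -- `[𝔪,𝔪] = 𝔤 ∩ ({0} × H)`
      bracketSpan br 𝔪 =
        (bracketSpan br 𝔪 ⊔ 𝔪) ⊓ (⊥ : Submodule ℝ V).prod (⊤ : Submodule ℝ H) := by
  classical
  -- basic memberships
  have hWO : W ≤ O := hO ▸ le_sup_left
  have hNO : N ≤ O := hO ▸ le_sup_right
  have hbN : ∀ x ∈ W, ∀ y ∈ W, b x y ∈ N := fun x hx y hy =>
    hN ▸ Submodule.subset_span ⟨x, hx, y, hy, rfl⟩
  have hWzero : ∀ w ∈ W, (∀ y ∈ W, ⟪w, y⟫ = 0) → w = 0 := by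
    intro w hw h
    exact inner_self_eq_zero.mp (h w hw)
  have hbbN_inner : ∀ x ∈ W, ∀ ξ : V, ∀ w ∈ W, ⟪bb x ξ, w⟫ = -⟪ξ, b x w⟫ := by
    intro x hx ξ w hw
    rw [hbb_skew x hx, hbb_W x hx w hw]
  have hbb_memO : ∀ x ∈ W, ∀ v ∈ O, bb x v ∈ O := by
    intro x hx v hv
    rw [hO] at hv
    obtain ⟨w, hw, n, hn, rfl⟩ := Submodule.mem_sup.mp hv
    rw [map_add]
    refine O.add_mem ?_ (hWO (hbb_N x hx n hn))
    rw [hbb_W x hx w hw]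
    exact hNO (hbN x hx w hw)
  -- additivity / homogeneity of `bb` in the subscript, on `N`
  have key_addN : ∀ x ∈ W, ∀ y ∈ W, ∀ ξ ∈ N, bb (x + y) ξ = bb x ξ + bb y ξ := by
    intro x hx y hy ξ hξ
    have hxy : x + y ∈ W := W.add_mem hx hy
    have hmem : bb (x + y) ξ - (bb x ξ + bb y ξ) ∈ W :=
      W.sub_mem (hbb_N _ hxy ξ hξ) (W.add_mem (hbb_N x hx ξ hξ) (hbb_N y hy ξ hξ))
    have h0 : bb (x + y) ξ - (bb x ξ + bb y ξ) = 0 := by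
      refine hWzero _ hmem ?_
      intro w hw
      rw [inner_sub_left, inner_add_left, hbbN_inner _ hxy ξ w hw,
        hbbN_inner x hx ξ w hw, hbbN_inner y hy ξ w hw]
      have hb' : b (x + y) w = b x w + b y w := by
        simp [map_add]
      rw [hb', inner_add_right]
      ring
    exact sub_eq_zero.mp h0
  have key_smulN : ∀ x ∈ W, ∀ (c : ℝ), ∀ ξ ∈ N, bb (c • x) ξ = c • bb x ξ := by
    intro x hx c ξ hξ
    have hcx : c • x ∈ W := W.smul_mem c hx
    have hmem : bb (c • x) ξ - c • bb x ξ ∈ W :=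
      W.sub_mem (hbb_N _ hcx ξ hξ) (W.smul_mem c (hbb_N x hx ξ hξ))
    have h0 : bb (c • x) ξ - c • bb x ξ = 0 := by
      refine hWzero _ hmem ?_
      intro w hw
      rw [inner_sub_left, real_inner_smul_left, hbbN_inner _ hcx ξ w hw,
        hbbN_inner x hx ξ w hw]
      have hb' : b (c • x) w = c • b x w := by
        simp [map_smul]
      rw [hb', real_inner_smul_right]
      ring
    exact sub_eq_zero.mp h0
  -- additivity / homogeneity of `bb` in the subscript, on `O`
  have hbb_addO : ∀ x ∈ W, ∀ y ∈ W, ∀ v ∈ O, bb (x + y) v = bb x v + bb y v := by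
    intro x hx y hy v hv
    rw [hO] at hv
    obtain ⟨w, hw, n, hn, rfl⟩ := Submodule.mem_sup.mp hv
    rw [map_add, map_add, map_add, key_addN x hx y hy n hn]
    have hW' : bb (x + y) w = bb x w + bb y w := by
      rw [hbb_W _ (W.add_mem hx hy) w hw, hbb_W x hx w hw, hbb_W y hy w hw]
      simp [map_add]
    rw [hW']
    abel
  have hbb_smulO : ∀ x ∈ W, ∀ (c : ℝ), ∀ v ∈ O, bb (c • x) v = c • bb x v := by
    intro x hx c v hv
    rw [hO] at hv
    obtain ⟨w, hw, n, hn, rfl⟩ := Submodule.mem_sup.mp hv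
    rw [map_add, map_add, key_smulN x hx c n hn]
    have hW' : bb (c • x) w = c • bb x w := by
      rw [hbb_W _ (W.smul_mem c hx) w hw, hbb_W x hx w hw]
      simp [map_smul]
    rw [hW', smul_add]
  have hbb_zeroO : ∀ v ∈ O, bb 0 v = 0 := by
    intro v hv
    have h := hbb_smulO 0 W.zero_mem 0 v hv
    simpa using h
  -- linearity of `β` on `W`
  have hβ_add : ∀ x y : V, x ∈ W → y ∈ W → β (x + y) = β x + β y := by
    intro x y hx hy
    have hxy : x + y ∈ W := W.add_mem hx hy
    have h0 : ((β (x + y) : V →ₗ[ℝ] V) - (β x : V →ₗ[ℝ] V)) - (β y : V →ₗ[ℝ] V) = 0 := by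
      refine huniq _ (H.sub_mem (H.sub_mem (β (x + y)).2 (β x).2) (β y).2) ?_
      intro v hv
      simp only [LinearMap.sub_apply]
      rw [hβ _ hxy v hv, hβ x hx v hv, hβ y hy v hv, hbb_addO x hx y hy v hv]
      abel
    refine Subtype.ext ?_
    rw [Submodule.coe_add]
    rwa [sub_sub, sub_eq_zero] at h0
  have hβ_smul : ∀ x : V, ∀ c : ℝ, x ∈ W → β (c • x) = c • β x := by
    intro x c hx
    have hcx : c • x ∈ W := W.smul_mem c hx
    have h0 : (β (c • x) : V →ₗ[ℝ] V) - c • (β x : V →ₗ[ℝ] V) = 0 := by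
      refine huniq _ (H.sub_mem (β (c • x)).2 (H.smul_mem c (β x).2)) ?_
      intro v hv
      simp only [LinearMap.sub_apply, LinearMap.smul_apply]
      rw [hβ _ hcx v hv, hβ x hx v hv, hbb_smulO x hx c v hv, sub_self]
    refine Subtype.ext ?_
    rw [SetLike.val_smul]
    rwa [sub_eq_zero] at h0
  have hβ_zero : β 0 = 0 := by
    have h0 : (β 0 : V →ₗ[ℝ] V) = 0 := by
      refine huniq _ (β 0).2 ?_
      intro v hv
      rw [hβ 0 W.zero_mem v hv, hbb_zeroO v hv]
    exact Subtype.ext h0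
  -- the subspace `𝔪`
  obtain ⟨m, hm_carrier⟩ : ∃ m : Submodule ℝ (V × H),
      (m : Set (V × H)) = {p : V × H | ∃ x ∈ W, p = (x, β x)} := by
    refine ⟨{ carrier := {p : V × H | ∃ x ∈ W, p = (x, β x)},
              add_mem' := ?_, zero_mem' := ?_, smul_mem' := ?_ }, rfl⟩
    · rintro p q ⟨x, hx, rfl⟩ ⟨y, hy, rfl⟩
      exact ⟨x + y, W.add_mem hx hy, by rw [hβ_add x y hx hy, Prod.mk_add_mk]⟩
    · exact ⟨0, W.zero_mem, by rw [hβ_zero]; rfl⟩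
    · rintro c p ⟨x, hx, rfl⟩
      exact ⟨c • x, W.smul_mem c hx, by rw [hβ_smul x c hx, Prod.smul_mk]⟩
  have hmem_m : ∀ p : V × H, p ∈ m ↔ ∃ x ∈ W, p = (x, β x) := by
    intro p
    rw [← SetLike.mem_coe, hm_carrier]
    exact Iff.rfl
  -- skew-symmetry of the bracket
  have hskew : ∀ p q : V × H, br p q = -br q p := by
    intro p q
    have h := hbr_alt (p + q)
    simp only [map_add, LinearMap.add_apply, hbr_alt, zero_add, add_zero] at h
    exact eq_neg_of_add_eq_zero_right h
  -- components of brackets of lifted elements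
  have hsplit : ∀ (v : V) (A : H), ((v, A) : V × H) = (v, 0) + (0, A) := by
    intro v A; simp
  have hxb : ∀ (x : V) (B : H), br ((x, 0) : V × H) ((0 : V), B) =
      -(((B : V →ₗ[ℝ] V) x, 0) : V × H) := by
    intro x B
    rw [hskew ((x, 0) : V × H) ((0 : V), B), hbr_hv B x]
  have hfst : ∀ (x y : V) (A B : H),
      (br (x, A) (y, B)).1 = (A : V →ₗ[ℝ] V) y - (B : V →ₗ[ℝ] V) x := by
    intro x y A B
    rw [hsplit x A, hsplit y B]
    simp only [map_add, LinearMap.add_apply, Prod.fst_add]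
    rw [hbr_vv x y, hbr_hv A y, hbr_hh A B, hxb x B]
    simp only [Prod.fst_neg]
    abel
  have hsnd : ∀ (x y : V) (A B : H), ((br (x, A) (y, B)).2 : V →ₗ[ℝ] V) =
      -R x y + ((A : V →ₗ[ℝ] V) ∘ₗ (B : V →ₗ[ℝ] V) - (B : V →ₗ[ℝ] V) ∘ₗ (A : V →ₗ[ℝ] V)) := by
    intro x y A B
    rw [hsplit x A, hsplit y B]
    simp only [map_add, LinearMap.add_apply, Prod.snd_add]
    rw [hbr_hv A y, hbr_hh A B, hxb x B]
    simp only [Prod.snd_neg]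
    push_cast
    rw [hR x y]
    abel
  have hfst0 : ∀ x ∈ W, ∀ y ∈ W, (br (x, β x) (y, β y)).1 = 0 := by
    intro x hx y hy
    rw [hfst, hβ x hx y (hWO hy), hβ y hy x (hWO hx), hbb_W x hx y hy, hbb_W y hy x hx,
      hb_symm x hx y hy, sub_self]
  -- the key triple-bracket computation
  have htriple : ∀ x ∈ W, ∀ y ∈ W, ∀ z ∈ W,
      br (br (x, β x) (y, β y)) (z, β z) ∈ m := by
    intro x hx y hy z hz
    set K : H := (br (x, β x) (y, β y)).2 with hKdef
    have hg2 : (K : V →ₗ[ℝ] V) =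
        -R x y + ((β x : V →ₗ[ℝ] V) ∘ₗ (β y : V →ₗ[ℝ] V)
          - (β y : V →ₗ[ℝ] V) ∘ₗ (β x : V →ₗ[ℝ] V)) := hsnd x y (β x) (β y)
    have hgeq : br (x, β x) (y, β y) = ((0 : V), K) := by
      refine Prod.ext ?_ rfl
      exact hfst0 x hx y hy
    have hK : ∀ v ∈ O, (K : V →ₗ[ℝ] V) v =
        -(R x y v - (bb x (bb y v) - bb y (bb x v))) := by
      intro v hv
      rw [hg2]
      simp only [LinearMap.add_apply, LinearMap.neg_apply, LinearMap.sub_apply,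
        LinearMap.comp_apply]
      rw [hβ y hy v hv, hβ x hx _ (hbb_memO y hy v hv), hβ x hx v hv,
        hβ y hy _ (hbb_memO x hx v hv)]
      abel
    have hKO : ∀ v ∈ O, (K : V →ₗ[ℝ] V) v ∈ O := by
      intro v hv
      rw [hK v hv]
      exact O.neg_mem (O.sub_mem (hcurvO x hx y hy v hv)
        (O.sub_mem (hbb_memO x hx _ (hbb_memO y hy v hv))
          (hbb_memO y hy _ (hbb_memO x hx v hv))))
    set w₀ : V := R x y z - (bb x (bb y z) - bb y (bb x z)) with hw₀
    have hw₀W : w₀ ∈ W := by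
      refine W.sub_mem (hcurvW x hx y hy z hz) (W.sub_mem ?_ ?_)
      · rw [hbb_W y hy z hz]
        exact hbb_N x hx _ (hbN y hy z hz)
      · rw [hbb_W x hx z hz]
        exact hbb_N y hy _ (hbN x hx z hz)
    have hKz : (K : V →ₗ[ℝ] V) z = -w₀ := hK z (hWO hz)
    have hcomm : (⟨(K : V →ₗ[ℝ] V) ∘ₗ (β z : V →ₗ[ℝ] V)
        - (β z : V →ₗ[ℝ] V) ∘ₗ (K : V →ₗ[ℝ] V),
        hHlie K K.2 (β z) (β z).2⟩ : H) = β ((K : V →ₗ[ℝ] V) z) := by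
      have h0 : ((K : V →ₗ[ℝ] V) ∘ₗ (β z : V →ₗ[ℝ] V)
          - (β z : V →ₗ[ℝ] V) ∘ₗ (K : V →ₗ[ℝ] V))
          - (β ((K : V →ₗ[ℝ] V) z) : V →ₗ[ℝ] V) = 0 := by
        refine huniq _ (H.sub_mem (hHlie K K.2 (β z) (β z).2)
          (β ((K : V →ₗ[ℝ] V) z)).2) ?_
        intro v hv
        have hsem := hsemi x hx y hy z hz v hv
        rw [← hw₀] at hsem
        simp only [LinearMap.sub_apply, LinearMap.comp_apply, map_sub] at hsem ⊢
        rw [hβ z hz v hv]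
        rw [hβ z hz _ (hKO v hv)]
        rw [hK _ (hbb_memO z hz v hv)]
        rw [hKz]
        have e5 : (β (-w₀) : V →ₗ[ℝ] V) v = bb (-w₀) v := hβ _ (W.neg_mem hw₀W) v hv
        rw [e5]
        have e6 : bb (-w₀) v = -(bb w₀ v) := by
          have h := hbb_smulO w₀ hw₀W (-1) v hv
          simpa [neg_one_smul] using h
        rw [e6, hK v hv]
        simp only [map_neg, map_sub]
        rw [hsem]
        abel
      refine Subtype.ext ?_
      rwa [sub_eq_zero] at h0
    rw [hgeq, hsplit z (β z), map_add, hbr_hv K z, hbr_hh K (β z), hcomm]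
    refine (hmem_m _).mpr ⟨(K : V →ₗ[ℝ] V) z, ?_, by simp⟩
    rw [hKz]
    exact W.neg_mem hw₀W
  -- item 2
  have hitem2 : bracketSpan br m ≤ (⊥ : Submodule ℝ V).prod (⊤ : Submodule ℝ H) := by
    refine Submodule.span_le.mpr ?_
    rintro p ⟨q, hq, r, hr, rfl⟩
    obtain ⟨x, hx, rfl⟩ := (hmem_m _).mp hq
    obtain ⟨y, hy, rfl⟩ := (hmem_m _).mp hr
    refine Submodule.mem_prod.mpr ⟨?_, trivial⟩
    simpa using hfst0 x hx y hy
  -- item 3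
  have hitem3 : ∀ p ∈ bracketSpan br m, ∀ q ∈ m, br p q ∈ m := by
    intro p hp q hq
    obtain ⟨z, hz, rfl⟩ := (hmem_m _).mp hq
    have hle : bracketSpan br m ≤ Submodule.comap (br.flip (z, β z)) m := by
      refine Submodule.span_le.mpr ?_
      rintro p' ⟨q', hq', r', hr', rfl⟩
      obtain ⟨x, hx, rfl⟩ := (hmem_m _).mp hq'
      obtain ⟨y, hy, rfl⟩ := (hmem_m _).mp hr'
      simp only [SetLike.mem_coe, Submodule.mem_comap, LinearMap.flip_apply]
      exact htriple x hx y hy z hz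
    exact hle hp
  -- item 4
  have hGspan : bracketSpan br m ⊔ m =
      Submodule.span ℝ ({p : V × H | ∃ q ∈ m, ∃ r ∈ m, br q r = p} ∪ (m : Set (V × H))) := by
    rw [Submodule.span_union, Submodule.span_eq m]
    rfl
  have hkey : ∀ g1 ∈ ({p : V × H | ∃ q ∈ m, ∃ r ∈ m, br q r = p} ∪ (m : Set (V × H))),
      ∀ g2 ∈ ({p : V × H | ∃ q ∈ m, ∃ r ∈ m, br q r = p} ∪ (m : Set (V × H))),
      br g1 g2 ∈ bracketSpan br m ⊔ m := by
    rintro g1 (⟨q1, hq1, r1, hr1, rfl⟩ | h1) g2 (⟨q2, hq2, r2, hr2, rfl⟩ | h2)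
    · -- generator, generator: Jacobi
      have hg1span : br q1 r1 ∈ bracketSpan br m :=
        Submodule.subset_span ⟨q1, hq1, r1, hr1, rfl⟩
      have hx1 : br (br q1 r1) q2 ∈ m := hitem3 _ hg1span q2 hq2
      have hx2 : br r2 (br (br q1 r1) q2) ∈ bracketSpan br m :=
        Submodule.subset_span ⟨r2, hr2, _, hx1, rfl⟩
      have hx3 : br r2 (br q1 r1) ∈ m := by
        rw [hskew]
        exact m.neg_mem (hitem3 _ hg1span r2 hr2)
      have hx4 : br q2 (br r2 (br q1 r1)) ∈ bracketSpan br m :=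
        Submodule.subset_span ⟨q2, hq2, _, hx3, rfl⟩
      have hj := hbr_jacobi (br q1 r1) q2 r2
      rw [add_assoc] at hj
      rw [eq_neg_of_add_eq_zero_left hj]
      exact Submodule.neg_mem _ (add_mem (Submodule.mem_sup_left hx4) (Submodule.mem_sup_left hx2))
    · -- generator, element of m
      have hg1span : br q1 r1 ∈ bracketSpan br m :=
        Submodule.subset_span ⟨q1, hq1, r1, hr1, rfl⟩
      exact Submodule.mem_sup_right (hitem3 _ hg1span g2 h2)
    · -- element of m, generator
      rw [hskew]
      have hg2span : br q2 r2 ∈ bracketSpan br m :=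
        Submodule.subset_span ⟨q2, hq2, r2, hr2, rfl⟩
      exact Submodule.neg_mem _ (Submodule.mem_sup_right (hitem3 _ hg2span g1 h1))
    · -- both in m
      exact Submodule.mem_sup_left (Submodule.subset_span ⟨g1, h1, g2, h2, rfl⟩)
  have hitem4 : ∀ p ∈ bracketSpan br m ⊔ m, ∀ q ∈ bracketSpan br m ⊔ m,
      br p q ∈ bracketSpan br m ⊔ m := by
    intro p hp q hq
    rw [hGspan] at hp hq
    have step : ∀ g1 ∈ ({p : V × H | ∃ q ∈ m, ∃ r ∈ m, br q r = p} ∪ (m : Set (V × H))),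
        br g1 q ∈ bracketSpan br m ⊔ m := by
      intro g1 hg1
      have hle : Submodule.span ℝ
          ({p : V × H | ∃ q ∈ m, ∃ r ∈ m, br q r = p} ∪ (m : Set (V × H))) ≤
          Submodule.comap (br g1) (bracketSpan br m ⊔ m) :=
        Submodule.span_le.mpr (fun g2 hg2 => hkey g1 hg1 g2 hg2)
      exact hle hq
    have hle : Submodule.span ℝ
        ({p : V × H | ∃ q ∈ m, ∃ r ∈ m, br q r = p} ∪ (m : Set (V × H))) ≤
        Submodule.comap (br.flip q) (bracketSpan br m ⊔ m) :=
      Submodule.span_le.mpr (fun g1 hg1 => step g1 hg1)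
    exact hle hp
  -- item 5
  have hitem5 : bracketSpan br m ⊓ m = ⊥ := by
    rw [eq_bot_iff]
    intro p hp
    obtain ⟨hp1, hp2⟩ := Submodule.mem_inf.mp hp
    obtain ⟨x, hx, rfl⟩ := (hmem_m _).mp hp2
    have hx0 : x = 0 := by
      have h := (Submodule.mem_prod.mp (hitem2 hp1)).1
      simpa using h
    subst hx0
    have : ((0 : V), β 0) = (0 : V × H) := by rw [hβ_zero]; rfl
    rw [this]
    exact Submodule.zero_mem ⊥
  -- item 6
  have hitem6 : bracketSpan br m =
      (bracketSpan br m ⊔ m) ⊓ (⊥ : Submodule ℝ V).prod (⊤ : Submodule ℝ H) := by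
    refine le_antisymm (le_inf le_sup_left hitem2) ?_
    intro p hp
    obtain ⟨hp1, hp2⟩ := Submodule.mem_inf.mp hp
    obtain ⟨u, hu, v, hv, rfl⟩ := Submodule.mem_sup.mp hp1
    obtain ⟨x, hx, rfl⟩ := (hmem_m _).mp hv
    have hu1 : u.1 = 0 := by
      have h := (Submodule.mem_prod.mp (hitem2 hu)).1
      simpa using h
    have hx0 : x = 0 := by
      have h : (u + ((x, β x) : V × H)).1 = 0 := by
        have h' := (Submodule.mem_prod.mp hp2).1
        simpa using h'
      rw [Prod.fst_add, hu1, zero_add] at h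
      exact h
    subst hx0
    have h0 : ((0 : V), β 0) = (0 : V × H) := by rw [hβ_zero]; rfl
    rw [h0, add_zero]
    exact hu
  exact ⟨m, hm_carrier, hitem2, hitem3, hitem4, hitem5, hitem6⟩
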